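/- arXiv:1311.3895 — 2 statements merged into one kernel-verified Lean document; each statement's English description precedes it below -/
import Mathlib

section
/- Let d ≥ 1, μ ∈ M_c^+(ℝ^d), and α ∈ [0,∞]. Let G_α = {x ∈ supp(μ) : there exists a strictly increasing sequence of integers (n_j) with lim_{j→∞} log μ(B(x,2^{−n_j}))/log(2^{−n_j}) = α}. Then dim_H G_α ≤ f̄^LD_μ(α), with the convention dim_H ∅ = −∞. -/
open MeasureTheory Metric Set Filter Topology
open scoped ENNReal NNReal

noncomputable section

/-- `ℝ^d` with the Euclidean metric. -/
abbrev Euc (d : ℕ) : Type := EuclideanSpace ℝ (Fin d)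

/-- The topological support of a Borel measure on `ℝ^d`. -/
def msupp {d : ℕ} (μ : Measure (Euc d)) : Set (Euc d) :=
  {x | ∀ r : ℝ, 0 < r → 0 < μ (closedBall x r)}

/-- `μ ∈ 𝓜_c^+(ℝ^d)`: a nonzero finite compactly supported Borel measure. -/
def McPlus {d : ℕ} (μ : Measure (Euc d)) : Prop :=
  IsFiniteMeasure μ ∧ μ ≠ 0 ∧ ∃ K : Set (Euc d), IsCompact K ∧ μ Kᶜ = 0

/-- Logarithm `ℝ≥0∞ → EReal`, with `log 0 = ⊥` and `log ⊤ = ⊤`. -/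
def elog (x : ℝ≥0∞) : EReal :=
  if x = 0 then ⊥ else if x = ⊤ then ⊤ else ((Real.log x.toReal : ℝ) : EReal)

/-- Lower local dimension `liminf_{r→0⁺} log μ(B(x,r)) / log r`, valued in `EReal`. -/
def dLow {d : ℕ} (μ : Measure (Euc d)) (x : Euc d) : EReal :=
  Filter.liminf
    (fun r : ℝ => elog (μ (closedBall x r)) * (((Real.log r)⁻¹ : ℝ) : EReal)) (𝓝[>] (0:ℝ))

/-- Upper local dimension `limsup_{r→0⁺} log μ(B(x,r)) / log r`, valued in `EReal`. -/
def dUp {d : ℕ} (μ : Measure (Euc d)) (x : Euc d) : EReal :=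
  Filter.limsup
    (fun r : ℝ => elog (μ (closedBall x r)) * (((Real.log r)⁻¹ : ℝ) : EReal)) (𝓝[>] (0:ℝ))

/-- The level set `E(μ,α,β)`. -/
def Eab {d : ℕ} (μ : Measure (Euc d)) (α β : EReal) : Set (Euc d) :=
  {x ∈ msupp μ | dLow μ x = α ∧ dUp μ x = β}

/-- The level set `E̲(μ,α)`. -/
def Elow {d : ℕ} (μ : Measure (Euc d)) (α : EReal) : Set (Euc d) :=
  {x ∈ msupp μ | dLow μ x = α}

/-- The level set `Ē(μ,α)`. -/
def Eup {d : ℕ} (μ : Measure (Euc d)) (α : EReal) : Set (Euc d) :=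
  {x ∈ msupp μ | dUp μ x = α}

/-- The level set `E(μ,α) = E(μ,α,α)`. -/
def Epoint {d : ℕ} (μ : Measure (Euc d)) (α : EReal) : Set (Euc d) := Eab μ α α

-- Hausdorff dimension with the convention `dim_H ∅ = −∞`, valued in `EReal`.
open Classical in
def dimHE {X : Type*} [EMetricSpace X] (s : Set X) : EReal :=
  if s = ∅ then ⊥ else ((dimH s : ℝ≥0∞) : EReal)

/-- A centered packing of `supp μ` by pairwise disjoint closed balls of radius `r`. -/
def IsPacking {d : ℕ} (μ : Measure (Euc d)) (r : ℝ) (P : Set (Euc d)) : Prop :=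
  P ⊆ msupp μ ∧ P.PairwiseDisjoint fun x => closedBall x r

/-- `sup { Σ_i μ(B(x_i,r))^q }` over all centered packings of radius `r`. -/
def packSum {d : ℕ} (μ : Measure (Euc d)) (q r : ℝ) : ℝ≥0∞ :=
  ⨆ (P : Set (Euc d)) (_ : IsPacking μ r P), ∑' x : P, μ (closedBall (x : Euc d) r) ^ q

/-- The lower `L^q`-spectrum `τ_μ`. -/
def tauLow {d : ℕ} (μ : Measure (Euc d)) (q : ℝ) : EReal :=
  Filter.liminf (fun r : ℝ => elog (packSum μ q r) * (((Real.log r)⁻¹ : ℝ) : EReal)) (𝓝[>] (0:ℝ))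

/-- The upper `L^q`-spectrum `τ̄_μ`. -/
def tauUp {d : ℕ} (μ : Measure (Euc d)) (q : ℝ) : EReal :=
  Filter.limsup (fun r : ℝ => elog (packSum μ q r) * (((Real.log r)⁻¹ : ℝ) : EReal)) (𝓝[>] (0:ℝ))

/-- Extended concave Legendre–Fenchel transform of `τ : ℝ → ℝ∪{−∞}` at `α ∈ ℝ∪{∞}`;
the `EReal` product `α * q` encodes the conventions `∞·q = −∞` for `q < 0`, `∞·0 = 0`. -/
def eLegendre (τ : ℝ → EReal) (α : EReal) : EReal :=
  sInf {v : EReal | ∃ q : ℝ, τ q ≠ ⊥ ∧ (α = ⊤ → q ≤ 0) ∧ v = α * (q : EReal) - τ q}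

/-- Legendre–Fenchel transform `f*` of a spectrum `f` defined on `ℝ∪{∞}`;
the `EReal` product `q * α` encodes the conventions `q·∞ = ±∞` for `q ≷ 0`, `0·∞ = 0`. -/
def specStar (f : EReal → EReal) (q : ℝ) : EReal :=
  sInf {v : EReal | ∃ α : EReal, α ≠ ⊥ ∧ f α ≠ ⊥ ∧ v = (q : EReal) * α - f α}

/-- `sup #{i : lo ≤ μ(B(x_i,r)) ≤ hi}` over all centered packings of radius `r`. -/
def ldCount {d : ℕ} (μ : Measure (Euc d)) (lo hi : ℝ≥0∞) (r : ℝ) : ℝ≥0∞ :=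
  ⨆ (P : Set (Euc d)) (_ : IsPacking μ r P),
    ({x ∈ P | lo ≤ μ (closedBall x r) ∧ μ (closedBall x r) ≤ hi}).encard

/-- `r ^ γ` for an extended exponent `γ`, with the convention `r^∞ = 0`. -/
def rpowE (r : ℝ) (γ : EReal) : ℝ≥0∞ :=
  if γ = ⊤ then 0 else if γ = ⊥ then ⊤ else ENNReal.ofReal (r ^ γ.toReal)

/-- The lower large-deviations spectrum `f̲^LD_μ(α,β)` for `0 ≤ α ≤ β ≤ ∞`. -/
def fLDlowAB {d : ℕ} (μ : Measure (Euc d)) (α β : EReal) : EReal :=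
  if α = ⊤ then
    ⨅ A : ℝ, Filter.liminf
      (fun r : ℝ => elog (ldCount μ 0 (ENNReal.ofReal (r ^ A)) r) * (((-Real.log r)⁻¹ : ℝ) : EReal))
      (𝓝[>] (0:ℝ))
  else
    ⨅ (ε : ℝ) (_ : 0 < ε), Filter.liminf
      (fun r : ℝ =>
        elog (ldCount μ (rpowE r (β + (ε : EReal))) (rpowE r (α - (ε : EReal))) r) *
          (((-Real.log r)⁻¹ : ℝ) : EReal))
      (𝓝[>] (0:ℝ))

/-- The lower large-deviations spectrum `f̲^LD_μ(α)`. -/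
def fLDlow {d : ℕ} (μ : Measure (Euc d)) (α : EReal) : EReal := fLDlowAB μ α α

/-- The upper large-deviations spectrum `f̄^LD_μ(α)`. -/
def fLDup {d : ℕ} (μ : Measure (Euc d)) (α : EReal) : EReal :=
  if α = ⊤ then
    ⨅ A : ℝ, Filter.limsup
      (fun r : ℝ => elog (ldCount μ 0 (ENNReal.ofReal (r ^ A)) r) * (((-Real.log r)⁻¹ : ℝ) : EReal))
      (𝓝[>] (0:ℝ))
  else
    ⨅ (ε : ℝ) (_ : 0 < ε), Filter.limsup
      (fun r : ℝ =>
        elog (ldCount μ (rpowE r (α + (ε : EReal))) (rpowE r (α - (ε : EReal))) r) *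
          (((-Real.log r)⁻¹ : ℝ) : EReal))
      (𝓝[>] (0:ℝ))

/-- `μ` is exact dimensional with dimension `D`. -/
def ExactDim {d : ℕ} (μ : Measure (Euc d)) (D : ℝ) : Prop :=
  ∀ᵐ x ∂μ, Filter.Tendsto (fun r : ℝ => Real.log (μ (closedBall x r)).toReal / Real.log r)
    (𝓝[>] (0:ℝ)) (𝓝 D)

/-- `μ` is homogeneously multifractal: the lower Hausdorff spectrum of the restriction of `μ`
to any closed ball whose interior meets `supp μ` coincides with that of `μ`. -/
def HMmeas {d : ℕ} (μ : Measure (Euc d)) : Prop :=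
  ∀ (c : Euc d) (R : ℝ), (interior (closedBall c R) ∩ msupp μ).Nonempty →
    ∀ α : EReal, 0 ≤ α →
      dimHE (Elow (μ.restrict (closedBall c R)) α) = dimHE (Elow μ α)

/-- The necessary properties of an `L^q`-spectrum in dimension `d`. -/
structure IsLqSpec (d : ℕ) (τ : ℝ → EReal) : Prop where
  ne_top : ∀ q : ℝ, τ q ≠ ⊤
  concave : ∀ q₁ q₂ t : ℝ, 0 ≤ t → t ≤ 1 →
    ((t : ℝ) : EReal) * τ q₁ + (((1 - t : ℝ)) : EReal) * τ q₂ ≤ τ (t * q₁ + (1 - t) * q₂)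
  mono : Monotone τ
  at_one : τ 1 = 0
  neg_d_le : -(((d : ℝ)) : EReal) ≤ τ 0
  le_zero : τ 0 ≤ 0
  dom : {q : ℝ | τ q ≠ ⊥} = Set.univ ∨ {q : ℝ | τ q ≠ ⊥} = Set.Ici 0
  star_nonneg : ∀ α : EReal, eLegendre τ α ≠ ⊥ → 0 ≤ eLegendre τ α

/-- The class `𝓕(d)` of candidate lower Hausdorff spectra, viewed as functions on
`ℝ∪{∞} ⊂ EReal` (the value at `⊥` is irrelevant: the domain condition forces `f ⊥ = ⊥`). -/
structure IsFd (d : ℕ) (f : EReal → EReal) : Prop where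
  hasFix : ∃ D : ℝ, f ((D : ℝ) : EReal) = ((D : ℝ) : EReal)
  dom_sub : {α : EReal | f α ≠ ⊥} ⊆ Set.Ici (0 : EReal)
  dom_closed : IsClosed {α : EReal | f α ≠ ⊥}
  range' : ∀ α : EReal, f α = ⊥ ∨ (0 ≤ f α ∧ f α ≤ ((d : ℝ) : EReal))
  usc : UpperSemicontinuousOn f {α : EReal | ⊥ < α}
  le_id : ∀ α : EReal, f α ≤ α

/-- Concavity of a spectrum on the real part of its domain. -/
def SpecConcave (f : EReal → EReal) : Prop :=
  ∀ α₁ α₂ t : ℝ, f ((α₁ : ℝ) : EReal) ≠ ⊥ → f ((α₂ : ℝ) : EReal) ≠ ⊥ → 0 ≤ t → t ≤ 1 →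
    ((t : ℝ) : EReal) * f ((α₁ : ℝ) : EReal) + (((1 - t : ℝ)) : EReal) * f ((α₂ : ℝ) : EReal) ≤
      f (((t * α₁ + (1 - t) * α₂ : ℝ)) : EReal)

/-!
Fix a real `s > f̄^LD_μ(α)`. By definition, for some band of masses (`[r^(α+ε), r^(α-ε)]`
if `α < ∞`, `[0, r^A]` if `α = ∞`) and all small `r = 2^(-n)`, every centred packing of radius
`r` has at most `r^(-s)` balls whose mass lies in the band. Each point of `G_α` has its mass in
the band at infinitely many dyadic scales. A maximal packing of radius `r` of these points covers
them by the balls of radius `2r` with the same centres, so `G_α` lies in the limsup of a family of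
balls with `∑ diam^c ≲ ∑ₙ 2^(n(s-c)) < ∞` for every `c > s`, and the Hausdorff–Cantelli lemma
gives `𝓗^c(G_α) = 0`. If `s < 0` the count bound is `< 1`, so `G_α` is empty.
-/

section LogRatio

variable {m : ℝ≥0∞} {r : ℝ}

theorem elog_of_ne_zero_of_ne_top (h0 : m ≠ 0) (htop : m ≠ ⊤) :
    elog m = (Real.log m.toReal : EReal) := by
  rw [elog, if_neg h0, if_neg htop]

theorem coe_lt_elog_mul_inv_log_iff (hr0 : 0 < r) (hr1 : r < 1) {a : ℝ} :
    (a : EReal) < elog m * ((Real.log r)⁻¹ : ℝ) ↔ m < ENNReal.ofReal (r ^ a) := by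
  have hlog : (Real.log r)⁻¹ < 0 := inv_lt_zero.2 (Real.log_neg hr0 hr1)
  rcases eq_or_ne m 0 with rfl | h0
  · simp [elog, EReal.bot_mul_coe_of_neg hlog, Real.rpow_pos_of_pos hr0]
  rcases eq_or_ne m ⊤ with rfl | htop
  · simp [elog, EReal.top_mul_coe_of_neg hlog]
  have hm : 0 < m.toReal := ENNReal.toReal_pos h0 htop
  rw [elog_of_ne_zero_of_ne_top h0 htop, ← EReal.coe_mul, EReal.coe_lt_coe_iff,
    ENNReal.lt_ofReal_iff_toReal_lt htop, ← div_eq_mul_inv,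
    lt_div_iff_of_neg (Real.log_neg hr0 hr1), ← Real.log_rpow hr0,
    Real.log_lt_log_iff hm (Real.rpow_pos_of_pos hr0 a)]

theorem elog_mul_inv_log_lt_coe_iff (hr0 : 0 < r) (hr1 : r < 1) {b : ℝ} :
    elog m * ((Real.log r)⁻¹ : ℝ) < b ↔ ENNReal.ofReal (r ^ b) < m := by
  have hlog : (Real.log r)⁻¹ < 0 := inv_lt_zero.2 (Real.log_neg hr0 hr1)
  rcases eq_or_ne m 0 with rfl | h0
  · simp [elog, EReal.bot_mul_coe_of_neg hlog]
  rcases eq_or_ne m ⊤ with rfl | htop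
  · simp [elog, EReal.top_mul_coe_of_neg hlog]
  have hm : 0 < m.toReal := ENNReal.toReal_pos h0 htop
  rw [elog_of_ne_zero_of_ne_top h0 htop, ← EReal.coe_mul, EReal.coe_lt_coe_iff,
    ENNReal.ofReal_lt_iff_lt_toReal (Real.rpow_nonneg hr0.le b) htop, ← div_eq_mul_inv,
    div_lt_iff_of_neg (Real.log_neg hr0 hr1), ← Real.log_rpow hr0,
    Real.log_lt_log_iff (Real.rpow_pos_of_pos hr0 b) hm]

theorem elog_mul_inv_neg_log_lt_coe_iff (hr0 : 0 < r) (hr1 : r < 1) {s : ℝ} :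
    elog m * ((-Real.log r)⁻¹ : ℝ) < s ↔ m < ENNReal.ofReal (r ^ (-s)) := by
  rw [inv_neg, EReal.coe_neg, mul_neg, EReal.neg_lt_comm, ← EReal.coe_neg,
    coe_lt_elog_mul_inv_log_iff hr0 hr1]

end LogRatio

theorem hausdorffMeasure_setOf_frequently_mem_eq_zero {X ι : Type*} [EMetricSpace X]
    [MeasurableSpace X] [BorelSpace X] [Countable ι] {E : ι → Set X} {c : ℝ} (hc : 0 < c)
    (hE : ∑' i, ediam (E i) ^ c ≠ ⊤) :
    μH[c] {x | ∃ᶠ i in cofinite, x ∈ E i} = 0 := by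
  set tail : Finset ι → ℝ≥0∞ := fun F => ∑' i : {i // i ∉ F}, ediam (E i) ^ c
  have htail : Tendsto tail atTop (𝓝 0) := ENNReal.tendsto_tsum_compl_atTop_zero hE
  -- a cover by the sets `E i`, `i ∉ F`, has mesh at most `(tail F) ^ c⁻¹`
  have hmesh : Tendsto (fun F => tail F ^ c⁻¹) atTop (𝓝 0) := by
    simpa [ENNReal.zero_rpow_of_pos (inv_pos.2 hc)] using htail.ennrpow_const c⁻¹
  refine le_antisymm ?_ bot_le
  calc μH[c] {x | ∃ᶠ i in cofinite, x ∈ E i}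
      ≤ liminf (fun F : Finset ι => ∑' i : {i // i ∉ F}, ediam (E i) ^ c) atTop := by
        refine Measure.hausdorffMeasure_le_liminf_tsum c _ _ hmesh (fun F (i : {i // i ∉ F}) => E i)
          (Eventually.of_forall fun F i => ?_) (Eventually.of_forall fun F x hx => ?_)
        · exact (ENNReal.le_rpow_inv_iff hc).2 (ENNReal.le_tsum i)
        · obtain ⟨i, hxi, hiF⟩ := (frequently_cofinite_iff_infinite.1 hx).exists_notMem_finset F
          exact mem_iUnion.2 ⟨⟨i, hiF⟩, hxi⟩
    _ = 0 := htail.liminf_eq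

theorem two_rpow_neg_natCast_mem_Ioo {n : ℕ} (hn : n ≠ 0) : (2:ℝ) ^ (-(n:ℝ)) ∈ Ioo 0 1 :=
  ⟨by positivity, Real.rpow_lt_one_of_one_lt_of_neg one_lt_two
    (neg_lt_zero.2 (Nat.cast_pos.2 (Nat.pos_of_ne_zero hn)))⟩

theorem tendsto_two_rpow_neg_natCast_nhdsGT_zero :
    Tendsto (fun n : ℕ => (2:ℝ) ^ (-(n:ℝ))) atTop (𝓝[>] 0) := by
  refine tendsto_nhdsWithin_of_tendsto_nhds_of_eventually_within _ ?_
    (Eventually.of_forall fun n => mem_Ioi.2 (by positivity))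
  simpa [Real.rpow_neg, Real.rpow_natCast] using
    tendsto_pow_atTop_nhds_zero_of_lt_one (r := (2:ℝ)⁻¹) (by norm_num) (by norm_num)

theorem two_rpow_neg_natCast_rpow_neg_mul {K s c : ℝ} (hK : 0 ≤ K) (n : ℕ) :
    ((2:ℝ) ^ (-(n:ℝ))) ^ (-s) * (K * (2:ℝ) ^ (-(n:ℝ))) ^ c =
      K ^ c * ((2:ℝ) ^ (s - c)) ^ n := by
  rw [Real.mul_rpow hK (by positivity), ← Real.rpow_natCast, ← Real.rpow_mul zero_le_two,
    ← Real.rpow_mul zero_le_two, ← Real.rpow_mul zero_le_two, mul_left_comm,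
    ← Real.rpow_add two_pos]
  ring_nf

theorem tsum_ediam_closedBall_rpow_le {X : Type*} [PseudoMetricSpace X] (T : Set X) (ρ : ℝ)
    {c : ℝ} (hc : 0 ≤ c) :
    ∑' t : T, ediam (closedBall (t : X) ρ) ^ c ≤ T.encard * ENNReal.ofReal (2 * ρ) ^ c := by
  rw [← ENNReal.tsum_set_const]
  refine ENNReal.tsum_le_tsum fun t => ENNReal.rpow_le_rpow
    (Metric.ediam_le_of_forall_dist_le fun x hx y hy => ?_) hc
  linarith [dist_triangle_right x y t, mem_closedBall.1 hx, mem_closedBall.1 hy]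

theorem dimH_le_of_frequently_mem_closedBall {X : Type*} [MetricSpace X] {G : Set X}
    {T : ℕ → Set X} {K s : ℝ} (hK : 0 ≤ K)
    (hG : ∀ x ∈ G, ∃ᶠ n in atTop, ∃ t ∈ T n, x ∈ closedBall t (K * (2:ℝ) ^ (-(n:ℝ))))
    (hT : ∀ᶠ n in atTop,
      ((T n).encard : ℝ≥0∞) ≤ ENNReal.ofReal (((2:ℝ) ^ (-(n:ℝ))) ^ (-s))) :
    dimH G ≤ ENNReal.ofReal s := by
  borelize X
  obtain ⟨N, hN⟩ := eventually_atTop.1 hT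
  have : ∀ n : Ici N, Countable (T n) := fun n =>
    (Set.encard_ne_top_iff.1 fun h => by simpa [h] using hN n n.2).countable.to_subtype
  set E : (Σ n : Ici N, T n) → Set X := fun i => closedBall i.2 (K * (2:ℝ) ^ (-(i.1:ℝ)))
  have hGE : G ⊆ {x | ∃ᶠ i in cofinite, x ∈ E i} := by
    intro x hx
    refine frequently_cofinite_iff_infinite.2 (Set.Infinite.of_image (fun i => (i.1 : ℕ)) ?_)
    refine (Nat.frequently_atTop_iff_infinite.1 ((hG x hx).and_eventually
      (eventually_ge_atTop N))).mono ?_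
    rintro n ⟨⟨t, ht, hxt⟩, hNn⟩
    exact ⟨⟨⟨n, hNn⟩, ⟨t, ht⟩⟩, hxt, rfl⟩
  refine dimH_le fun c hc => le_of_not_gt fun hsc => ?_
  rw [← ENNReal.ofReal_coe_nnreal, ENNReal.ofReal_lt_ofReal_iff'] at hsc
  obtain ⟨hsc, hc0⟩ := hsc
  set A : ℝ≥0∞ := ENNReal.ofReal ((2 * K) ^ (c : ℝ))
  set q : ℝ≥0∞ := ENNReal.ofReal ((2:ℝ) ^ (s - c))
  have hq : q < 1 :=
    ENNReal.ofReal_lt_one.2 (Real.rpow_lt_one_of_one_lt_of_neg one_lt_two (by linarith))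
  have hterm (n : ℕ) (hn : N ≤ n) :
      ∑' t : T n, ediam (closedBall (t : X) (K * (2:ℝ) ^ (-(n:ℝ)))) ^ (c : ℝ) ≤ A * q ^ n :=
    calc _ ≤ (T n).encard * ENNReal.ofReal (2 * (K * (2:ℝ) ^ (-(n:ℝ)))) ^ (c : ℝ) :=
          tsum_ediam_closedBall_rpow_le (T n) _ c.2
      _ ≤ ENNReal.ofReal (((2:ℝ) ^ (-(n:ℝ))) ^ (-s)) *
            ENNReal.ofReal ((2 * (K * (2:ℝ) ^ (-(n:ℝ)))) ^ (c : ℝ)) :=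
          mul_le_mul' (hN n hn) (ENNReal.ofReal_rpow_of_nonneg (by positivity) c.2).le
      _ = A * q ^ n := by
          rw [← ENNReal.ofReal_mul (by positivity), ← mul_assoc,
            two_rpow_neg_natCast_rpow_neg_mul (by positivity), ENNReal.ofReal_mul (by positivity),
            ENNReal.ofReal_pow (by positivity)]
  have hsum : ∑' i, ediam (E i) ^ (c : ℝ) ≠ ⊤ := by
    refine ne_top_of_le_ne_top ?_ (calc
      ∑' i, ediam (E i) ^ (c : ℝ) = ∑' n : Ici N, ∑' t : T n, ediam (E ⟨n, t⟩) ^ (c : ℝ) :=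
          ENNReal.tsum_sigma' _
      _ ≤ ∑' n : Ici N, A * q ^ (n : ℕ) := ENNReal.tsum_le_tsum fun n => hterm n n.2
      _ ≤ ∑' n : ℕ, A * q ^ n :=
          ENNReal.tsum_comp_le_tsum_of_injective Subtype.val_injective (fun n => A * q ^ n))
    rw [ENNReal.tsum_mul_left, ENNReal.tsum_geometric]
    exact ENNReal.mul_ne_top ENNReal.ofReal_ne_top (ENNReal.inv_ne_top.2 (tsub_pos_of_lt hq).ne')
  have hG0 := measure_mono_null hGE (hausdorffMeasure_setOf_frequently_mem_eq_zero hc0 hsum)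
  exact ENNReal.top_ne_zero (hc ▸ hG0)

theorem exists_pairwiseDisjoint_closedBall_subset_iUnion_closedBall_two_mul {X : Type*}
    [PseudoMetricSpace X] (S : Set X) {r : ℝ} (hr : 0 ≤ r) :
    ∃ T ⊆ S, T.PairwiseDisjoint (fun x => closedBall x r) ∧
      S ⊆ ⋃ t ∈ T, closedBall t (2 * r) := by
  set ε : ℝ≥0 := ⟨2 * r, by positivity⟩
  obtain ⟨T, hT⟩ : ∃ T, Maximal (fun T => T ⊆ S ∧ Metric.IsSeparated ε T) T :=
    zorn_subset _ fun c hc hchain => ⟨⋃₀ c, ⟨sUnion_subset fun T hT => (hc hT).1,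
      (pairwise_sUnion hchain.directedOn).2 fun T hT => (hc hT).2⟩, fun _ => subset_sUnion_of_mem⟩
  refine ⟨T, hT.prop.1, fun a ha b hb hab => closedBall_disjoint_closedBall ?_,
    (Metric.IsCover.of_maximal_isSeparated hT).subset_iUnion_closedBall⟩
  have hab : (ε : ℝ≥0∞) < edist a b := hT.prop.2 ha hb hab
  rw [edist_dist, ← ENNReal.ofReal_coe_nnreal, ENNReal.ofReal_lt_ofReal_iff'] at hab
  linarith [show (ε : ℝ) = 2 * r from rfl, hab.1]

section Packing

variable {d : ℕ} {μ : Measure (Euc d)} {lo hi : ℝ≥0∞} {r : ℝ}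

theorem encard_le_ldCount {P : Set (Euc d)} (hP : IsPacking μ r P)
    (hband : ∀ x ∈ P, lo ≤ μ (closedBall x r) ∧ μ (closedBall x r) ≤ hi) :
    (P.encard : ℝ≥0∞) ≤ ldCount μ lo hi r :=
  le_iSup₂_of_le P hP (by rw [sep_eq_self_iff_mem_true.2 hband])

theorem one_le_ldCount {x : Euc d} (hx : x ∈ msupp μ)
    (hband : lo ≤ μ (closedBall x r) ∧ μ (closedBall x r) ≤ hi) : 1 ≤ ldCount μ lo hi r := by
  simpa using encard_le_ldCount (P := {x}) ⟨singleton_subset_iff.2 hx,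
    pairwiseDisjoint_singleton _ _⟩ (by simpa using hband)

end Packing

theorem dimHE_le_of_ldCount_le {d : ℕ} {μ : Measure (Euc d)} {G : Set (Euc d)}
    (hG : G ⊆ msupp μ) {lo hi : ℕ → ℝ≥0∞} {s : ℝ}
    (hband : ∀ x ∈ G, ∃ᶠ n : ℕ in atTop,
      lo n ≤ μ (closedBall x ((2:ℝ) ^ (-(n:ℝ)))) ∧ μ (closedBall x ((2:ℝ) ^ (-(n:ℝ)))) ≤ hi n)
    (hcount : ∀ᶠ n : ℕ in atTop,
      ldCount μ (lo n) (hi n) ((2:ℝ) ^ (-(n:ℝ))) ≤ ENNReal.ofReal (((2:ℝ) ^ (-(n:ℝ))) ^ (-s))) :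
    dimHE G ≤ s := by
  rw [dimHE]
  split_ifs with hG0
  · exact bot_le
  obtain ⟨x, hx⟩ := nonempty_iff_ne_empty.2 hG0
  have hs : 0 ≤ s := by
    by_contra! hs
    obtain ⟨n, hxn, hn, hn0⟩ :=
      ((hband x hx).and_eventually (hcount.and (eventually_ne_atTop 0))).exists
    have : ENNReal.ofReal (((2:ℝ) ^ (-(n:ℝ))) ^ (-s)) < 1 :=
      ENNReal.ofReal_lt_one.2 (Real.rpow_lt_one (by positivity)
        (two_rpow_neg_natCast_mem_Ioo hn0).2 (by linarith))
    exact (((one_le_ldCount (hG hx) hxn).trans hn).trans_lt this).false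
  set S : ℕ → Set (Euc d) := fun n => {x ∈ G |
    lo n ≤ μ (closedBall x ((2:ℝ) ^ (-(n:ℝ)))) ∧ μ (closedBall x ((2:ℝ) ^ (-(n:ℝ)))) ≤ hi n}
  choose T hTS hTdisj hTcover using fun n : ℕ =>
    exists_pairwiseDisjoint_closedBall_subset_iUnion_closedBall_two_mul (S n)
      (r := (2:ℝ) ^ (-(n:ℝ))) (by positivity)
  have hdim : dimH G ≤ ENNReal.ofReal s := by
    refine dimH_le_of_frequently_mem_closedBall zero_le_two (T := T) (fun x hx => ?_) ?_
    · exact (hband x hx).mono fun n hn => by simpa using hTcover n ⟨hx, hn⟩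
    · filter_upwards [hcount] with n hn
      exact (encard_le_ldCount ⟨fun t ht => hG (hTS n ht).1, hTdisj n⟩
        fun t ht => (hTS n ht).2).trans hn
  calc ((dimH G : ℝ≥0∞) : EReal) ≤ (ENNReal.ofReal s : EReal) :=
        EReal.coe_ennreal_le_coe_ennreal_iff.2 hdim
    _ = s := by rw [EReal.coe_ennreal_ofReal, max_eq_left hs]

theorem rpowE_coe (r x : ℝ) : rpowE r x = ENNReal.ofReal (r ^ x) := by
  simp [rpowE]

theorem eventually_le_rpow_neg_of_limsup_lt {N : ℝ → ℝ≥0∞} {s : ℝ}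
    (h : limsup (fun r => elog (N r) * ((-Real.log r)⁻¹ : ℝ)) (𝓝[>] 0) < s) :
    ∀ᶠ r in 𝓝[>] 0, N r ≤ ENNReal.ofReal (r ^ (-s)) := by
  filter_upwards [eventually_lt_of_limsup_lt h, Ioo_mem_nhdsGT one_pos] with r hr hr01
  exact ((elog_mul_inv_neg_log_lt_coe_iff hr01.1 hr01.2).1 hr).le

theorem exists_band_of_fLDup_lt {d : ℕ} {μ : Measure (Euc d)} {α : EReal} (hα : α ≠ ⊥) {s : ℝ}
    (hs : fLDup μ α < s) :
    ∃ lo hi : ℝ → ℝ≥0∞, ∃ U ∈ 𝓝 α,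
      (∀ᶠ r in 𝓝[>] 0, ldCount μ (lo r) (hi r) r ≤ ENNReal.ofReal (r ^ (-s))) ∧
      ∀ r ∈ Ioo (0:ℝ) 1, ∀ m : ℝ≥0∞,
        elog m * ((Real.log r)⁻¹ : ℝ) ∈ U → lo r ≤ m ∧ m ≤ hi r := by
  induction α with
  | bot => exact absurd rfl hα
  | top =>
    rw [fLDup, if_pos rfl] at hs
    obtain ⟨A, hA⟩ := iInf_lt_iff.1 hs
    refine ⟨0, fun r => ENNReal.ofReal (r ^ A), Ioi A, Ioi_mem_nhds (EReal.coe_lt_top A),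
      eventually_le_rpow_neg_of_limsup_lt hA, fun r hr m hm => ⟨zero_le, ?_⟩⟩
    exact ((coe_lt_elog_mul_inv_log_iff hr.1 hr.2).1 hm).le
  | coe a =>
    rw [fLDup, if_neg (EReal.coe_ne_top a)] at hs
    obtain ⟨ε, hε⟩ := iInf_lt_iff.1 hs
    obtain ⟨hε0, hε⟩ := iInf_lt_iff.1 hε
    refine ⟨fun r => rpowE r ((a : EReal) + ε), fun r => rpowE r ((a : EReal) - ε),
      Ioo ↑(a - ε) ↑(a + ε), Ioo_mem_nhds (by exact_mod_cast sub_lt_self a hε0)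
        (by exact_mod_cast lt_add_of_pos_right a hε0),
      eventually_le_rpow_neg_of_limsup_lt hε, fun r hr m hm => ?_⟩
    simp only [← EReal.coe_add, ← EReal.coe_sub, rpowE_coe]
    exact ⟨((elog_mul_inv_log_lt_coe_iff hr.1 hr.2).1 hm.2).le,
      ((coe_lt_elog_mul_inv_log_iff hr.1 hr.2).1 hm.1).le⟩

theorem statement15_general (d : ℕ) (μ : Measure (Euc d))
    (α : EReal) (h0 : 0 ≤ α) :
    dimHE {x ∈ msupp μ | ∃ nseq : ℕ → ℕ, StrictMono nseq ∧
      Filter.Tendsto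
        (fun j : ℕ =>
          elog (μ (closedBall x ((2:ℝ) ^ (-(nseq j : ℝ))))) *
            (((Real.log ((2:ℝ) ^ (-(nseq j : ℝ))))⁻¹ : ℝ) : EReal))
        atTop (𝓝 α)} ≤ fLDup μ α := by
  refine EReal.le_of_forall_lt_iff_le.1 fun s hs => ?_
  obtain ⟨lo, hi, U, hU, hcount, hband⟩ :=
    exists_band_of_fLDup_lt (ne_bot_of_le_ne_bot EReal.zero_ne_bot h0) hs
  refine dimHE_le_of_ldCount_le (lo := fun n => lo ((2:ℝ) ^ (-(n:ℝ))))
    (hi := fun n => hi ((2:ℝ) ^ (-(n:ℝ)))) (fun x hx => hx.1) ?_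
    (tendsto_two_rpow_neg_natCast_nhdsGT_zero.eventually hcount)
  rintro x ⟨-, nseq, hmono, htend⟩
  refine hmono.tendsto_atTop.frequently (Eventually.frequently ?_)
  filter_upwards [htend hU, hmono.tendsto_atTop.eventually_ne_atTop 0] with j hj hj0
  exact hband _ (two_rpow_neg_natCast_mem_Ioo hj0) _ hj

/-- from Section 5.2: the set of points admitting `α` as a limit of
dyadic-scale local exponents has Hausdorff dimension at most `f̄^LD_μ(α)`. -/
theorem statement15 (d : ℕ) (hd : 1 ≤ d) (μ : Measure (Euc d)) (hμ : McPlus μ)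
    (α : EReal) (h0 : 0 ≤ α) :
    dimHE {x ∈ msupp μ | ∃ nseq : ℕ → ℕ, StrictMono nseq ∧
      Filter.Tendsto
        (fun j : ℕ =>
          elog (μ (closedBall x ((2:ℝ) ^ (-(nseq j : ℝ))))) *
            (((Real.log ((2:ℝ) ^ (-(nseq j : ℝ))))⁻¹ : ℝ) : EReal))
        atTop (𝓝 α)} ≤ fLDup μ α :=
  statement15_general d μ α h0
end
end

section
/- Let d ≥ 1 and let μ ∈ M_c^+(ℝ^d) be exact dimensional with dimension D ∈ [0,d]. Then dim_H E(μ,D) ≥ D, and D is a fixed point of τ_μ*: inf{Dq − τ_μ(q) : q ∈ dom(τ_μ)} = D. Consequently μ strongly obeys the multifractal formalism at D: dim_H E(μ,D) = τ_μ*(D) = D. -/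
open MeasureTheory Metric Set Filter Topology
open scoped ENNReal NNReal

noncomputable section

/-!
Exact dimensionality puts `μ`-almost every point in `E(μ,D)`, and by an Egorov-type argument
the bounds `r^(D+ε) ≤ μ(B(x,r)) ≤ r^(D-ε)` hold uniformly for small `r` on a set of positive
measure. For `s > D` every point of `E(μ,D)` has `μ(B(x,r)) ≥ r^s` at arbitrarily small
scales, and a Vitali covering bounds `H^s(E(μ,D))` by `8^s μ(ℝ^d)`; for `s < D` the mass
distribution principle applied to `μ` restricted to such a uniform set gives `H^s > 0`.
So `dim_H E(μ,D) = D`.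

On the uniform set `A`, a disjoint Vitali family of `r`-balls centred in `A` is a packing of
about `μ(A) r^(-D)` balls, each of mass `≈ r^D`, so `τ_μ(q) ≤ (q-1)D` for every `q`; and
`τ_μ(1) ≥ 0` because disjoint balls carry at most the total mass. Hence `Dq - τ_μ(q) ≥ D`,
with equality at `q = 1`.
-/

section ScalingExponent

variable {f : ℝ → ℝ≥0∞} {a : ℝ≥0∞} {r s t C : ℝ}

/-- `dLow μ x` and `tauLow μ q` are this exponent for `r ↦ μ (closedBall x r)` and
`packSum μ q`. -/
def lowerExponent (f : ℝ → ℝ≥0∞) : EReal :=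
  liminf (fun r : ℝ => elog (f r) * (((Real.log r)⁻¹ : ℝ) : EReal)) (𝓝[>] 0)

def upperExponent (f : ℝ → ℝ≥0∞) : EReal :=
  limsup (fun r : ℝ => elog (f r) * (((Real.log r)⁻¹ : ℝ) : EReal)) (𝓝[>] 0)

lemma elog_of_ne (h0 : a ≠ 0) (htop : a ≠ ⊤) : elog a = Real.log a.toReal := by
  simp [elog, h0, htop]

lemma elog_mul_inv_log_le_iff (hr0 : 0 < r) (hr1 : r < 1) :
    elog a * (((Real.log r)⁻¹ : ℝ) : EReal) ≤ s ↔ ENNReal.ofReal (r ^ s) ≤ a := by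
  have hlog : Real.log r < 0 := Real.log_neg hr0 hr1
  have hinv : (((Real.log r)⁻¹ : ℝ) : EReal) < 0 := by exact_mod_cast inv_lt_zero.2 hlog
  have hrs : 0 < r ^ s := Real.rpow_pos_of_pos hr0 s
  rcases eq_or_ne a 0 with rfl | h0
  · simp [elog, EReal.bot_mul_of_neg hinv, hrs]
  rcases eq_or_ne a ⊤ with rfl | htop
  · simp [elog, EReal.top_mul_of_neg hinv]
  have hm : 0 < a.toReal := ENNReal.toReal_pos h0 htop
  rw [elog_of_ne h0 htop, ← EReal.coe_mul, EReal.coe_le_coe_iff, ← div_eq_mul_inv,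
    div_le_iff_of_neg hlog, ← Real.log_rpow hr0, Real.log_le_log_iff hrs hm,
    ← ENNReal.ofReal_le_ofReal_iff hm.le, ENNReal.ofReal_toReal htop]

lemma elog_mul_inv_log_lt_iff (hr0 : 0 < r) (hr1 : r < 1) :
    elog a * (((Real.log r)⁻¹ : ℝ) : EReal) < s ↔ ENNReal.ofReal (r ^ s) < a := by
  have hlog : Real.log r < 0 := Real.log_neg hr0 hr1
  have hinv : (((Real.log r)⁻¹ : ℝ) : EReal) < 0 := by exact_mod_cast inv_lt_zero.2 hlog
  have hrs : 0 < r ^ s := Real.rpow_pos_of_pos hr0 s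
  rcases eq_or_ne a 0 with rfl | h0
  · simp [elog, EReal.bot_mul_of_neg hinv]
  rcases eq_or_ne a ⊤ with rfl | htop
  · simp [elog, EReal.top_mul_of_neg hinv]
  have hm : 0 < a.toReal := ENNReal.toReal_pos h0 htop
  rw [elog_of_ne h0 htop, ← EReal.coe_mul, EReal.coe_lt_coe_iff, ← div_eq_mul_inv,
    div_lt_iff_of_neg hlog, ← Real.log_rpow hr0, Real.log_lt_log_iff hrs hm,
    ← ENNReal.ofReal_lt_ofReal_iff hm, ENNReal.ofReal_toReal htop]

lemma eventually_lt_rpow_of_lt_lowerExponent (h : (s : EReal) < lowerExponent f) :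
    ∀ᶠ r in 𝓝[>] 0, f r < ENNReal.ofReal (r ^ s) := by
  filter_upwards [eventually_lt_of_lt_liminf h, Ioo_mem_nhdsGT one_pos] with r hr hr01
  exact not_le.1 ((elog_mul_inv_log_le_iff hr01.1 hr01.2).not.1 (not_le.2 hr))

lemma frequently_rpow_lt_of_lowerExponent_lt (h : lowerExponent f < s) :
    ∃ᶠ r in 𝓝[>] 0, ENNReal.ofReal (r ^ s) < f r :=
  ((frequently_lt_of_liminf_lt (by isBoundedDefault) h).and_eventually
    (Ioo_mem_nhdsGT one_pos)).mono fun _ ⟨hr, hr01⟩ =>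
      (elog_mul_inv_log_lt_iff hr01.1 hr01.2).1 hr

lemma eventually_rpow_lt_of_upperExponent_lt (h : upperExponent f < s) :
    ∀ᶠ r in 𝓝[>] 0, ENNReal.ofReal (r ^ s) < f r := by
  filter_upwards [eventually_lt_of_limsup_lt h, Ioo_mem_nhdsGT one_pos] with r hr hr01
  exact (elog_mul_inv_log_lt_iff hr01.1 hr01.2).1 hr

lemma tendsto_add_log_div_log :
    Tendsto (fun r => t + Real.log C / Real.log r) (𝓝[>] 0) (𝓝 t) := by
  have h := ((tendsto_inv_atBot_zero.comp Real.tendsto_log_nhdsGT_zero).const_mul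
    (Real.log C)).const_add t
  simpa [div_eq_mul_inv] using h

lemma rpow_add_log_div_log (hr0 : 0 < r) (hr1 : r < 1) (hC : 0 < C) :
    r ^ (t + Real.log C / Real.log r) = C * r ^ t := by
  rw [Real.rpow_add hr0, Real.rpow_def_of_pos hr0 (Real.log C / Real.log r),
    mul_div_cancel₀ _ (Real.log_neg hr0 hr1).ne, Real.exp_log hC, mul_comm]

lemma lowerExponent_le_of_eventually_le (hC : 0 < C)
    (h : ∀ᶠ r in 𝓝[>] 0, ENNReal.ofReal (C * r ^ t) ≤ f r) : lowerExponent f ≤ t := by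
  have hle : ∀ᶠ r in 𝓝[>] 0, elog (f r) * (((Real.log r)⁻¹ : ℝ) : EReal) ≤
      ((t + Real.log C / Real.log r : ℝ) : EReal) := by
    filter_upwards [h, Ioo_mem_nhdsGT one_pos] with r hr hr01
    rwa [elog_mul_inv_log_le_iff hr01.1 hr01.2, rpow_add_log_div_log hr01.1 hr01.2 hC]
  calc lowerExponent f
      ≤ liminf (fun r => ((t + Real.log C / Real.log r : ℝ) : EReal)) (𝓝[>] 0) :=
        liminf_le_liminf hle
    _ = t := (EReal.tendsto_coe.2 tendsto_add_log_div_log).liminf_eq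

lemma le_lowerExponent_of_eventually_le (hC : 0 < C)
    (h : ∀ᶠ r in 𝓝[>] 0, f r ≤ ENNReal.ofReal (C * r ^ t)) :
    (t : EReal) ≤ lowerExponent f := by
  have hle : ∀ᶠ r in 𝓝[>] 0, ((t + Real.log C / Real.log r : ℝ) : EReal) ≤
      elog (f r) * (((Real.log r)⁻¹ : ℝ) : EReal) := by
    filter_upwards [h, Ioo_mem_nhdsGT one_pos] with r hr hr01
    rw [← not_lt, elog_mul_inv_log_lt_iff hr01.1 hr01.2, rpow_add_log_div_log hr01.1 hr01.2 hC]
    exact hr.not_gt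
  calc (t : EReal)
      = liminf (fun r => ((t + Real.log C / Real.log r : ℝ) : EReal)) (𝓝[>] 0) :=
        (EReal.tendsto_coe.2 tendsto_add_log_div_log).liminf_eq.symm
    _ ≤ lowerExponent f := liminf_le_liminf hle

lemma tendsto_elog_mul_inv_log {D : ℝ} (hf : ∀ᶠ r in 𝓝[>] 0, f r ≠ 0 ∧ f r ≠ ⊤)
    (h : Tendsto (fun r => Real.log (f r).toReal / Real.log r) (𝓝[>] 0) (𝓝 D)) :
    Tendsto (fun r => elog (f r) * (((Real.log r)⁻¹ : ℝ) : EReal)) (𝓝[>] 0)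
      (𝓝 (D : EReal)) := by
  refine (EReal.tendsto_coe.2 h).congr' ?_
  filter_upwards [hf] with r hr
  rw [elog_of_ne hr.1 hr.2, ← EReal.coe_mul, div_eq_mul_inv]

end ScalingExponent

lemma exists_measure_ne_zero_forall_Ioo {α : Type*} [MeasurableSpace α] {μ : Measure α}
    (hμ : μ ≠ 0) {Q : α → Prop} {P : α → ℝ → Prop}
    (h : ∀ᵐ x ∂μ, Q x ∧ ∀ᶠ r in 𝓝[>] 0, P x r) :
    ∃ A : Set α, ∃ δ > 0, μ A ≠ 0 ∧ ∀ x ∈ A, Q x ∧ ∀ r ∈ Ioo 0 δ, P x r := by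
  set A : ℕ → Set α := fun n => {x | Q x ∧ ∀ r ∈ Ioo 0 (1 / ((n : ℝ) + 1)), P x r}
  have hcov : ∀ᵐ x ∂μ, x ∈ ⋃ n, A n := h.mono fun x ⟨hQ, hP⟩ => by
    obtain ⟨u, hu, hsub⟩ := mem_nhdsGT_iff_exists_Ioo_subset.1 hP
    obtain ⟨n, hn⟩ := exists_nat_one_div_lt (mem_Ioi.1 hu)
    exact mem_iUnion.2 ⟨n, hQ, fun r hr => hsub ⟨hr.1, hr.2.trans hn⟩⟩
  obtain ⟨n, hn⟩ : ∃ n, μ (A n) ≠ 0 := by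
    by_contra! hA
    have := ae_neBot.2 hμ
    obtain ⟨x, hx, hx'⟩ :=
      (hcov.and (measure_eq_zero_iff_ae_notMem.1 (measure_iUnion_null hA))).exists
    exact hx' hx
  exact ⟨A n, 1 / ((n : ℝ) + 1), by positivity, hn, fun x hx => hx⟩

section MetricMeasure

variable {X : Type*} [MetricSpace X]

lemma ediam_closedBall_le_ofReal (x : X) (ρ : ℝ) :
    ediam (closedBall x ρ) ≤ ENNReal.ofReal (2 * ρ) :=
  Metric.ediam_le_of_forall_dist_le fun y hy z hz => by
    have := dist_triangle_right y z x
    rw [mem_closedBall] at hy hz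
    linarith

variable [MeasurableSpace X] {μ : Measure X}

lemma measure_closedBall_le_of_forall_Ioo {x : X} {s δ ρ : ℝ} (hs : 0 ≤ s)
    (h : ∀ r ∈ Ioo 0 δ, μ (closedBall x r) ≤ ENNReal.ofReal (r ^ s))
    (hρ : ρ ∈ Ico 0 δ) :
    μ (closedBall x ρ) ≤ ENNReal.ofReal (ρ ^ s) := by
  have hcont : Tendsto (fun r : ℝ => ENNReal.ofReal (r ^ s)) (𝓝[>] ρ)
      (𝓝 (ENNReal.ofReal (ρ ^ s))) :=
    (ENNReal.continuous_ofReal.tendsto _).comp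
      ((Real.continuousAt_rpow_const ρ s (Or.inr hs)).tendsto.mono_left nhdsWithin_le_nhds)
  refine ge_of_tendsto hcont ?_
  filter_upwards [Ioo_mem_nhdsGT hρ.2] with r hr
  exact (measure_mono (closedBall_subset_closedBall hr.1.le)).trans
    (h r ⟨hρ.1.trans_lt hr.1, hr.2⟩)

variable [BorelSpace X]

lemma le_dimH_of_forall_measure_closedBall_le {A : Set X} (hA : μ A ≠ 0) {s δ : ℝ}
    (hs : 0 ≤ s) (hδ : 0 < δ)
    (h : ∀ x ∈ A, ∀ r ∈ Ioo 0 δ, μ (closedBall x r) ≤ ENNReal.ofReal (r ^ s)) :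
    ENNReal.ofReal s ≤ dimH A := by
  -- if `closure t` meets `A` at `x`, then `closure t ⊆ B(x, diam t)`
  have hν : μ.restrict A ≤ μH[s] := by
    refine Measure.le_hausdorffMeasure s _ (ENNReal.ofReal (δ / 2)) (by positivity) fun t ht => ?_
    calc μ.restrict A t ≤ μ.restrict A (closure t) := measure_mono subset_closure
      _ = μ (closure t ∩ A) := Measure.restrict_apply isClosed_closure.measurableSet
      _ ≤ ediam t ^ s := ?_
    rcases (closure t ∩ A).eq_empty_or_nonempty with he | ⟨x, hxt, hxA⟩
    · simp [he]
    have hfin : ediam t ≠ ⊤ := ne_top_of_le_ne_top ENNReal.ofReal_ne_top ht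
    have hsub : closure t ⊆ closedBall x (diam t) := fun y hy => by
      rw [mem_closedBall, ← diam_closure]
      exact dist_le_diam_of_mem (isBounded_iff_ediam_ne_top.2 hfin).closure hy hxt
    have hdiam : diam t < δ := by
      have : diam t ≤ δ / 2 := ENNReal.toReal_le_of_le_ofReal (by positivity) ht
      linarith
    calc μ (closure t ∩ A) ≤ μ (closedBall x (diam t)) :=
          measure_mono (inter_subset_left.trans hsub)
      _ ≤ ENNReal.ofReal (diam t ^ s) :=
          measure_closedBall_le_of_forall_Ioo hs (h x hxA) ⟨diam_nonneg, hdiam⟩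
      _ = ediam t ^ s := by
        rw [← ENNReal.ofReal_rpow_of_nonneg diam_nonneg hs, diam, ENNReal.ofReal_toReal hfin]
  have hH : μH[((s.toNNReal : ℝ≥0) : ℝ)] A ≠ 0 := by
    rw [Real.coe_toNNReal _ hs]
    exact ne_bot_of_le_ne_bot hA ((Measure.restrict_apply_self μ A).symm.trans_le (hν A))
  exact le_dimH_of_hausdorffMeasure_ne_zero hH

lemma exists_countable_disjoint_closedBall_cover {ι : Type*} (μ : Measure X) [SFinite μ]
    (t : Set ι) (c : ι → X) (r : ι → ℝ) {R : ℝ} (hR : ∀ i ∈ t, r i ≤ R)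
    (hpos : ∀ i ∈ t, 0 < μ (closedBall (c i) (r i))) :
    ∃ u ⊆ t, u.Countable ∧ u.PairwiseDisjoint (fun i => closedBall (c i) (r i)) ∧
      ∀ i ∈ t, closedBall (c i) (r i) ⊆ ⋃ j ∈ u, closedBall (c j) (4 * r j) := by
  obtain ⟨u, hut, hdisj, hcov⟩ :=
    Vitali.exists_disjoint_subfamily_covering_enlargement_closedBall t c r R hR 4 (by norm_num)
  refine ⟨u, hut, ?_, hdisj, fun i hi => ?_⟩
  · have hc := Measure.countable_meas_pos_of_disjoint_iUnion (μ := μ)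
      (As := fun j : u => closedBall (c j) (r j)) (fun _ => measurableSet_closedBall)
      fun j k hjk => hdisj j.2 k.2 (Subtype.coe_injective.ne hjk)
    exact countable_coe_iff.1 (countable_univ_iff.1 (hc.mono fun j _ => hpos j (hut j.2)))
  · obtain ⟨j, hj, hsub⟩ := hcov i hi
    exact hsub.trans (subset_biUnion_of_mem (u := fun j => closedBall (c j) (4 * r j)) hj)

variable {A : Set X} {s : ℝ}

lemma exists_closedBall_cover_tsum_le [SFinite μ] (hs : 0 ≤ s)
    (h : ∀ x ∈ A, ∃ᶠ r in 𝓝[>] 0, ENNReal.ofReal (r ^ s) ≤ μ (closedBall x r))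
    {δ : ℝ} (hδ : 0 < δ) :
    ∃ u : Set (X × ℝ), u.Countable ∧ A ⊆ ⋃ b ∈ u, closedBall b.1 (4 * b.2) ∧
      (∀ b ∈ u, ediam (closedBall b.1 (4 * b.2)) ≤ ENNReal.ofReal (8 * δ)) ∧
      ∑' b : u, ediam (closedBall b.1.1 (4 * b.1.2)) ^ s ≤
        ENNReal.ofReal (8 ^ s) * μ univ := by
  set t : Set (X × ℝ) :=
    {b | b.2 ∈ Ioc 0 δ ∧ ENNReal.ofReal (b.2 ^ s) ≤ μ (closedBall b.1 b.2)}
  obtain ⟨u, hut, hcount, hdisj, hcov⟩ := exists_countable_disjoint_closedBall_cover μ t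
    Prod.fst Prod.snd (fun b hb => hb.1.2)
    fun b hb => (ENNReal.ofReal_pos.2 (Real.rpow_pos_of_pos hb.1.1 s)).trans_le hb.2
  have hdiam : ∀ b ∈ u, ediam (closedBall b.1 (4 * b.2)) ^ s ≤
      ENNReal.ofReal (8 ^ s) * μ (closedBall b.1 b.2) := fun b hb => by
    have hb0 : 0 ≤ b.2 := (hut hb).1.1.le
    calc ediam (closedBall b.1 (4 * b.2)) ^ s ≤ ENNReal.ofReal (2 * (4 * b.2)) ^ s :=
          ENNReal.rpow_le_rpow (ediam_closedBall_le_ofReal _ _) hs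
      _ = ENNReal.ofReal (8 ^ s) * ENNReal.ofReal (b.2 ^ s) := by
          rw [ENNReal.ofReal_rpow_of_nonneg (by positivity) hs,
            ← ENNReal.ofReal_mul (by positivity), ← Real.mul_rpow (by norm_num) hb0,
            ← mul_assoc]
          norm_num
      _ ≤ ENNReal.ofReal (8 ^ s) * μ (closedBall b.1 b.2) := mul_le_mul_right (hut hb).2 _
  refine ⟨u, hcount, fun x hx => ?_, fun b hb => ?_, ?_⟩
  · obtain ⟨r, hr, hr0, hrδ⟩ := ((h x hx).and_eventually (Ioc_mem_nhdsGT hδ)).exists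
    exact hcov (x, r) ⟨⟨hr0, hrδ⟩, hr⟩ (mem_closedBall_self hr0.le)
  · refine (ediam_closedBall_le_ofReal _ _).trans (ENNReal.ofReal_le_ofReal ?_)
    linarith [(hut hb).1.2]
  · calc ∑' b : u, ediam (closedBall b.1.1 (4 * b.1.2)) ^ s
        ≤ ∑' b : u, ENNReal.ofReal (8 ^ s) * μ (closedBall b.1.1 b.1.2) :=
          ENNReal.tsum_le_tsum fun b => hdiam b b.2
      _ = ENNReal.ofReal (8 ^ s) * ∑' b : u, μ (closedBall b.1.1 b.1.2) := ENNReal.tsum_mul_left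
      _ ≤ ENNReal.ofReal (8 ^ s) * μ univ := by
          gcongr
          exact tsum_measure_le_measure_univ (fun _ => measurableSet_closedBall.nullMeasurableSet)
            fun b b' hbb' => (hdisj b.2 b'.2 (Subtype.coe_injective.ne hbb')).aedisjoint

lemma dimH_le_of_frequently_le_measure_closedBall [IsFiniteMeasure μ] (hs : 0 ≤ s)
    (h : ∀ x ∈ A, ∃ᶠ r in 𝓝[>] 0, ENNReal.ofReal (r ^ s) ≤ μ (closedBall x r)) :
    dimH A ≤ ENNReal.ofReal s := by
  choose u hcount hcov hdiam hsum using
    fun n : ℕ => exists_closedBall_cover_tsum_le hs h (Nat.one_div_pos_of_nat (n := n))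
  have := fun n => (hcount n).to_subtype
  have hlim :
      Tendsto (fun n : ℕ => ENNReal.ofReal (8 * (1 / ((n : ℝ) + 1)))) atTop (𝓝 0) := by
    simpa using ENNReal.tendsto_ofReal (tendsto_one_div_add_atTop_nhds_zero_nat.const_mul 8)
  have hH : μH[s] A ≤ ENNReal.ofReal (8 ^ s) * μ univ :=
    (Measure.hausdorffMeasure_le_liminf_tsum s A _ hlim
      (fun n (b : u n) => closedBall b.1.1 (4 * b.1.2))
      (Eventually.of_forall fun n b => hdiam n b b.2)
      (Eventually.of_forall fun n => (hcov n).trans_eq (biUnion_eq_iUnion _ _))).trans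
      (liminf_le_of_frequently_le' (Frequently.of_forall hsum))
  have hfin : μH[((s.toNNReal : ℝ≥0) : ℝ)] A ≠ ⊤ := by
    rw [Real.coe_toNNReal _ hs]
    exact ne_top_of_le_ne_top (ENNReal.mul_ne_top ENNReal.ofReal_ne_top (measure_ne_top μ _)) hH
  exact dimH_le_of_hausdorffMeasure_ne_top hfin

end MetricMeasure

lemma ENNReal.rpow_le_rpow_of_nonpos {x y : ℝ≥0∞} (hxy : x ≤ y) {z : ℝ} (hz : z ≤ 0) :
    y ^ z ≤ x ^ z := by
  rw [← neg_neg z, ENNReal.rpow_neg y, ENNReal.rpow_neg x]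
  exact ENNReal.inv_le_inv.2 (ENNReal.rpow_le_rpow hxy (neg_nonneg.2 hz))

/-- `D * q + ε * |q|` is `(D + ε) * q` for `q ≥ 0` and `(D - ε) * q` for `q < 0`. -/
lemma ofReal_rpow_le_rpow_of_mem_Icc {a : ℝ≥0∞} {r D ε : ℝ} (hr : 0 < r)
    (ha : a ∈ Icc (ENNReal.ofReal (r ^ (D + ε))) (ENNReal.ofReal (r ^ (D - ε)))) (q : ℝ) :
    ENNReal.ofReal (r ^ (D * q + ε * |q|)) ≤ a ^ q := by
  rcases le_or_gt 0 q with hq | hq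
  · calc ENNReal.ofReal (r ^ (D * q + ε * |q|)) = ENNReal.ofReal (r ^ (D + ε)) ^ q := by
          rw [ENNReal.ofReal_rpow_of_pos (Real.rpow_pos_of_pos hr _), ← Real.rpow_mul hr.le,
            abs_of_nonneg hq, add_mul]
      _ ≤ a ^ q := ENNReal.rpow_le_rpow ha.1 hq
  · calc ENNReal.ofReal (r ^ (D * q + ε * |q|)) = ENNReal.ofReal (r ^ (D - ε)) ^ q := by
          rw [ENNReal.ofReal_rpow_of_pos (Real.rpow_pos_of_pos hr _), ← Real.rpow_mul hr.le,
            abs_of_neg hq]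
          ring_nf
      _ ≤ a ^ q := ENNReal.rpow_le_rpow_of_nonpos ha.2 hq.le

section Multifractal

variable {d : ℕ} {μ : Measure (Euc d)}

lemma msupp_eq_support (μ : Measure (Euc d)) : msupp μ = μ.support := by
  ext x
  exact Metric.nhds_basis_closedBall.mem_measureSupport.symm

lemma ae_mem_msupp : ∀ᵐ x ∂μ, x ∈ msupp μ := msupp_eq_support μ ▸ μ.support_mem_ae

lemma eventually_measure_closedBall_mem_Icc {D ε : ℝ} {x : Euc d} (hx : x ∈ Epoint μ D)
    (hε : 0 < ε) : ∀ᶠ r in 𝓝[>] 0, μ (closedBall x r) ∈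
      Icc (ENNReal.ofReal (r ^ (D + ε))) (ENNReal.ofReal (r ^ (D - ε))) := by
  filter_upwards [eventually_rpow_lt_of_upperExponent_lt
      (hx.2.2.trans_lt (EReal.coe_lt_coe_iff.2 (lt_add_of_pos_right D hε))),
    eventually_lt_rpow_of_lt_lowerExponent
      ((EReal.coe_lt_coe_iff.2 (sub_lt_self D hε)).trans_eq hx.2.1.symm)] with r h₁ h₂
  exact ⟨h₁.le, h₂.le⟩

variable [IsFiniteMeasure μ] {D : ℝ}

lemma ae_mem_Epoint (hex : ExactDim μ D) : ∀ᵐ x ∂μ, x ∈ Epoint μ D := by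
  filter_upwards [hex, ae_mem_msupp] with x hx hsupp
  have h := tendsto_elog_mul_inv_log (f := fun r => μ (closedBall x r))
    (eventually_mem_nhdsWithin.mono fun r hr => ⟨(hsupp r hr).ne', measure_ne_top μ _⟩) hx
  exact ⟨hsupp, h.liminf_eq, h.limsup_eq⟩

lemma dimH_Epoint_le (hD : 0 ≤ D) : dimH (Epoint μ D) ≤ ENNReal.ofReal D := by
  refine ge_of_tendsto (ENNReal.tendsto_ofReal (tendsto_id.mono_left nhdsWithin_le_nhds) :
    Tendsto ENNReal.ofReal (𝓝[>] D) _) ?_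
  filter_upwards [self_mem_nhdsWithin] with s (hs : D < s)
  refine dimH_le_of_frequently_le_measure_closedBall (μ := μ) (hD.trans hs.le) fun x hx => ?_
  exact (frequently_rpow_lt_of_lowerExponent_lt
    (hx.2.1.trans_lt (EReal.coe_lt_coe_iff.2 hs))).mono fun _ => le_of_lt

lemma le_dimH_Epoint (hμ : μ ≠ 0) (hex : ExactDim μ D) :
    ENNReal.ofReal D ≤ dimH (Epoint μ D) := by
  refine le_of_tendsto (ENNReal.tendsto_ofReal (tendsto_id.mono_left nhdsWithin_le_nhds) :
    Tendsto ENNReal.ofReal (𝓝[<] D) _) ?_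
  filter_upwards [self_mem_nhdsWithin] with s (hs : s < D)
  rcases le_or_gt s 0 with hs0 | hs0
  · simp [ENNReal.ofReal_eq_zero.2 hs0]
  have hae : ∀ᵐ x ∂μ, x ∈ Epoint μ D ∧
      ∀ᶠ r in 𝓝[>] 0, μ (closedBall x r) ≤ ENNReal.ofReal (r ^ s) := by
    filter_upwards [ae_mem_Epoint hex] with x hx
    exact ⟨hx, (eventually_lt_rpow_of_lt_lowerExponent
      ((EReal.coe_lt_coe_iff.2 hs).trans_eq hx.2.1.symm)).mono fun _ => le_of_lt⟩
  obtain ⟨A, δ, hδ, hA, hAP⟩ := exists_measure_ne_zero_forall_Ioo hμ hae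
  calc ENNReal.ofReal s ≤ dimH A :=
        le_dimH_of_forall_measure_closedBall_le hA hs0.le hδ fun x hx => (hAP x hx).2
    _ ≤ dimH (Epoint μ D) := dimH_mono fun x hx => (hAP x hx).1

lemma dimHE_Epoint_eq (hμ : μ ≠ 0) (hD : 0 ≤ D) (hex : ExactDim μ D) :
    dimHE (Epoint μ D) = D := by
  have hne : Epoint μ D ≠ ∅ := by
    have := ae_neBot.2 hμ
    exact nonempty_iff_ne_empty.1 (ae_mem_Epoint hex).exists
  rw [dimHE, if_neg hne, le_antisymm (dimH_Epoint_le hD) (le_dimH_Epoint hμ hex),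
    EReal.coe_ennreal_ofReal, max_eq_left hD]

end Multifractal

section LqSpectrum

variable {d : ℕ} {μ : Measure (Euc d)}

lemma le_packSum {q r : ℝ} {P : Set (Euc d)} (hP : IsPacking μ r P) :
    ∑' x : P, μ (closedBall (x : Euc d) r) ^ q ≤ packSum μ q r :=
  le_iSup₂ (f := fun P (_ : IsPacking μ r P) => ∑' x : P, μ (closedBall (x : Euc d) r) ^ q)
    P hP

lemma packSum_one_le (r : ℝ) : packSum μ 1 r ≤ μ univ :=
  iSup₂_le fun P hP => by
    simp only [ENNReal.rpow_one]
    exact tsum_measure_le_measure_univ (fun _ => measurableSet_closedBall.nullMeasurableSet)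
      fun x y hxy => (hP.2 x.2 y.2 (Subtype.coe_injective.ne hxy)).aedisjoint

lemma tauLow_one_nonneg [IsFiniteMeasure μ] : 0 ≤ tauLow μ 1 := by
  have h := le_lowerExponent_of_eventually_le (f := packSum μ 1) (t := 0)
    (add_pos_of_nonneg_of_pos ENNReal.toReal_nonneg one_pos : 0 < (μ univ).toReal + 1)
    (Eventually.of_forall fun r => (packSum_one_le r).trans ?_)
  · exact_mod_cast h
  rw [Real.rpow_zero, mul_one, ENNReal.ofReal_add ENNReal.toReal_nonneg zero_le_one,
    ENNReal.ofReal_toReal (measure_ne_top μ _)]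
  exact le_self_add

/-- The balls of a disjoint Vitali subfamily of `{B(x,r) : x ∈ A}` form a packing whose fourfold
enlargements cover `A`. -/
lemma measure_mul_le_mul_packSum [SFinite μ] {A : Set (Euc d)} (hA : A ⊆ msupp μ) {q r : ℝ}
    (hr : 0 < r) {m M : ℝ≥0∞} (hm : ∀ x ∈ A, m ≤ μ (closedBall x r) ^ q)
    (hM : ∀ x ∈ A, μ (closedBall x (4 * r)) ≤ M) : μ A * m ≤ M * packSum μ q r := by
  obtain ⟨u, huA, hcount, hdisj, hcov⟩ := exists_countable_disjoint_closedBall_cover μ A id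
    (fun _ => r) (R := r) (fun _ _ => le_rfl) fun x hx => hA hx r hr
  calc μ A * m ≤ (∑' x : u, μ (closedBall (x : Euc d) (4 * r))) * m := by
        gcongr
        exact (measure_mono fun x hx => hcov x hx (mem_closedBall_self hr.le)).trans
          (measure_biUnion_le μ hcount _)
    _ = ∑' x : u, μ (closedBall (x : Euc d) (4 * r)) * m := ENNReal.tsum_mul_right.symm
    _ ≤ ∑' x : u, M * μ (closedBall (x : Euc d) r) ^ q :=
        ENNReal.tsum_le_tsum fun x => mul_le_mul' (hM x (huA x.2)) (hm x (huA x.2))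
    _ = M * ∑' x : u, μ (closedBall (x : Euc d) r) ^ q := ENNReal.tsum_mul_left
    _ ≤ M * packSum μ q r := by
        gcongr
        exact le_packSum ⟨huA.trans hA, hdisj⟩

variable [IsFiniteMeasure μ] {D : ℝ}

lemma tauLow_le_of_exactDim_of_pos (hμ : μ ≠ 0) (hex : ExactDim μ D) (q : ℝ) {ε : ℝ}
    (hε : 0 < ε) : tauLow μ q ≤ ((D * q - D + ε * (|q| + 1) : ℝ) : EReal) := by
  obtain ⟨A, δ, hδ, hA, hAP⟩ := exists_measure_ne_zero_forall_Ioo hμ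
    ((ae_mem_Epoint hex).mono fun x hx => ⟨hx, eventually_measure_closedBall_mem_Icc hx hε⟩)
  set b := D - ε
  set e := D * q + ε * |q|
  set C := (μ A).toReal / 4 ^ b
  have hC : 0 < C := div_pos (ENNReal.toReal_pos hA (measure_ne_top μ A)) (by positivity)
  refine lowerExponent_le_of_eventually_le hC ?_
  filter_upwards [Ioo_mem_nhdsGT (show 0 < δ / 4 by positivity)] with r hr
  have hr0 : 0 < r := hr.1
  have hpack : μ A * ENNReal.ofReal (r ^ e) ≤ ENNReal.ofReal ((4 * r) ^ b) * packSum μ q r :=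
    measure_mul_le_mul_packSum (fun x hx => (hAP x hx).1.1) hr0
      (fun x hx =>
        ofReal_rpow_le_rpow_of_mem_Icc hr0 ((hAP x hx).2 r ⟨hr0, by linarith [hr.2]⟩) q)
      fun x hx => ((hAP x hx).2 (4 * r) ⟨by positivity, by linarith [hr.2]⟩).2
  have hsplit : μ A * ENNReal.ofReal (r ^ e) =
      ENNReal.ofReal ((4 * r) ^ b) * ENNReal.ofReal (C * r ^ (D * q - D + ε * (|q| + 1))) := by
    rw [← ENNReal.ofReal_toReal (measure_ne_top μ A),
      ← ENNReal.ofReal_mul ENNReal.toReal_nonneg, ← ENNReal.ofReal_mul (by positivity),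
      Real.mul_rpow (by norm_num) hr0.le]
    congr 1
    have h4 : (0 : ℝ) < 4 ^ b := by positivity
    have hexp : e = b + (D * q - D + ε * (|q| + 1)) := by ring
    rw [hexp, Real.rpow_add hr0]
    simp only [C]
    field_simp
  rw [hsplit] at hpack
  exact (ENNReal.mul_le_mul_iff_right (ENNReal.ofReal_pos.2 (by positivity)).ne'
    ENNReal.ofReal_ne_top).1 hpack

lemma tauLow_le_of_exactDim (hμ : μ ≠ 0) (hex : ExactDim μ D) (q : ℝ) :
    tauLow μ q ≤ ((D * q - D : ℝ) : EReal) := by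
  have hlim : Tendsto (fun ε : ℝ => ((D * q - D + ε * (|q| + 1) : ℝ) : EReal)) (𝓝[>] 0)
      (𝓝 ((D * q - D : ℝ) : EReal)) := by
    refine EReal.tendsto_coe.2 (tendsto_nhdsWithin_of_tendsto_nhds ?_)
    simpa using ((continuous_mul_const (|q| + 1)).const_add (D * q - D)).tendsto 0
  exact ge_of_tendsto hlim
    (eventually_nhdsWithin_of_forall fun ε hε => tauLow_le_of_exactDim_of_pos hμ hex q hε)

lemma eLegendre_tauLow_eq (hμ : μ ≠ 0) (hex : ExactDim μ D) :
    eLegendre (tauLow μ) D = D := by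
  have hτ₁ : tauLow μ 1 = 0 :=
    le_antisymm (by simpa using tauLow_le_of_exactDim hμ hex 1) tauLow_one_nonneg
  refine le_antisymm
    (sInf_le ⟨1, by simp [hτ₁], fun h => absurd h (EReal.coe_ne_top D), ?_⟩) ?_
  · simp [hτ₁]
  refine le_sInf ?_
  rintro _ ⟨q, hbot, -, rfl⟩
  have hτ := tauLow_le_of_exactDim hμ hex q
  have htop : tauLow μ q ≠ ⊤ := ne_top_of_le_ne_top (EReal.coe_ne_top _) hτ
  rw [← EReal.coe_toReal htop hbot] at hτ ⊢
  rw [← EReal.coe_mul, ← EReal.coe_sub, EReal.coe_le_coe_iff]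
  linarith [EReal.coe_le_coe_iff.1 hτ]

end LqSpectrum

theorem statement19_general (d : ℕ) (μ : Measure (Euc d)) (hμ : McPlus μ)
    (D : ℝ) (hD0 : 0 ≤ D) (hex : ExactDim μ D) :
    ((D : ℝ) : EReal) ≤ dimHE (Epoint μ ((D : ℝ) : EReal)) ∧
    eLegendre (tauLow μ) ((D : ℝ) : EReal) = ((D : ℝ) : EReal) ∧
    dimHE (Epoint μ ((D : ℝ) : EReal)) = ((D : ℝ) : EReal) := by
  obtain ⟨_, hμ0, -⟩ := hμ
  have hdim := dimHE_Epoint_eq hμ0 hD0 hex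
  exact ⟨hdim.ge, eLegendre_tauLow_eq hμ0 hex, hdim⟩

/-- an exact dimensional measure strongly obeys the multifractal
formalism at its dimension `D`, which is a fixed point of `τ_μ*`. -/
theorem statement19 (d : ℕ) (hd : 1 ≤ d) (μ : Measure (Euc d)) (hμ : McPlus μ)
    (D : ℝ) (hD0 : 0 ≤ D) (hDd : D ≤ (d : ℝ)) (hex : ExactDim μ D) :
    ((D : ℝ) : EReal) ≤ dimHE (Epoint μ ((D : ℝ) : EReal)) ∧
    eLegendre (tauLow μ) ((D : ℝ) : EReal) = ((D : ℝ) : EReal) ∧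
    dimHE (Epoint μ ((D : ℝ) : EReal)) = ((D : ℝ) : EReal) :=
  statement19_general d μ hμ D hD0 hex

end
end
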